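/- arXiv:1012.1681 — 8 statements merged into one kernel-verified Lean document; each statement's English description precedes it below -/
import Mathlib

section
/- Let (x, r) be a feasible rate pair for the multi-commodity network (N, L, c), and define the delay-aware mapped link rates r̂ by r̂_{ij}^d = max(r_{ij}^d − r_{ji}^d, 0) for every directed link ⟨i,j⟩ and commodity d. Then (x, r̂) is also a feasible rate pair; in particular: (i) r̂_{ij}^d ≥ 0 and r̂_{ij}^d ≤ r_{ij}^d for all ⟨i,j⟩ and d, so Σ_d (r̂_{ij}^d + r̂_{ji}^d) ≤ c_{ij} for every link {i,j} ∈ L; (ii) r̂_{ij}^d − r̂_{ji}^d = r_{ij}^d − r_{ji}^d for all ⟨i,j⟩ and d, so the flow-conservation constraints x_i^d + Σ_{m:{m,i}∈L} r̂_{mi}^d ≤ Σ_{j:{i,j}∈L} r̂_{ij}^d hold for every node i ≠ d. -/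
open Finset

/-- Feasibility of a rate pair `(x, r)` for a multi-commodity network with node set `N`,
unordered links given by the (symmetric) relation `L`, link capacities `c`, and
commodity (destination) set `D`.  `x s d` is the exogenous rate of commodity `d` at node `s`,
and `r i j d` is the rate of commodity `d` on the directed link `⟨i,j⟩`. -/
def Feasible {N : Type*} [Fintype N] [DecidableEq N]
    (L : N → N → Prop) [DecidableRel L]
    (c : N → N → ℝ) (D : Finset N)
    (x : N → N → ℝ) (r : N → N → N → ℝ) : Prop :=
  (∀ s d, d ∈ D → 0 ≤ x s d) ∧
  (∀ i j d, L i j → d ∈ D → 0 ≤ r i j d) ∧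
  (∀ i j, L i j → ∑ d ∈ D, (r i j d + r j i d) ≤ c i j) ∧
  (∀ i d, d ∈ D → i ≠ d →
      x i d + ∑ m ∈ univ.filter (fun m => L m i), r m i d
        ≤ ∑ j ∈ univ.filter (fun j => L i j), r i j d)

/-- (Proposition 1, feasibility part.)  If `(x, r)` is a feasible rate pair, then the
delay-aware mapped pair `(x, r̂)` with `r̂ᵢⱼᵈ = max (rᵢⱼᵈ - rⱼᵢᵈ) 0` is also feasible;
in particular `0 ≤ r̂ᵢⱼᵈ ≤ rᵢⱼᵈ` and `r̂ᵢⱼᵈ - r̂ⱼᵢᵈ = rᵢⱼᵈ - rⱼᵢᵈ`. -/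
theorem delay_aware_mapping_preserves_feasibility
    {N : Type*} [Fintype N] [DecidableEq N]
    (L : N → N → Prop) [DecidableRel L] (hLsymm : Symmetric L)
    (c : N → N → ℝ) (hc : ∀ i j, L i j → 0 < c i j)
    (D : Finset N) (x : N → N → ℝ) (r : N → N → N → ℝ)
    (hfeas : Feasible L c D x r)
    (rhat : N → N → N → ℝ)
    (hrhat : ∀ i j d, rhat i j d = max (r i j d - r j i d) 0) :
    Feasible L c D x rhat ∧
    (∀ i j d, L i j → d ∈ D → 0 ≤ rhat i j d ∧ rhat i j d ≤ r i j d) ∧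
    (∀ i j d, rhat i j d - rhat j i d = r i j d - r j i d) := by
  obtain ⟨hx, hr, hcap, hcons⟩ := hfeas
  have hle : ∀ i j d, L i j → d ∈ D → 0 ≤ rhat i j d ∧ rhat i j d ≤ r i j d := by
    intro i j d hL hd
    constructor
    · rw [hrhat]; exact le_max_right _ _
    · rw [hrhat]
      have := hr j i d (hLsymm hL) hd
      have := hr i j d hL hd
      exact max_le (by linarith) (by linarith)
  have hdiff : ∀ i j d, rhat i j d - rhat j i d = r i j d - r j i d := by
    intro i j d
    rw [hrhat, hrhat]
    rcases le_total (r i j d) (r j i d) with h | h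
    · rw [max_eq_right (by linarith), max_eq_left (by linarith)]; ring
    · rw [max_eq_left (by linarith), max_eq_right (by linarith)]; ring
  refine ⟨⟨hx, fun i j d hL hd => (hle i j d hL hd).1, ?_, ?_⟩, hle, hdiff⟩
  · intro i j hL
    refine le_trans (Finset.sum_le_sum fun d hd => ?_) (hcap i j hL)
    exact add_le_add (hle i j d hL hd).2 (hle j i d (hLsymm hL) hd).2
  · intro i d hd hne
    have hset : (univ.filter (fun m => L m i)) = (univ.filter (fun j => L i j)) := by
      apply Finset.filter_congr
      intro m _
      exact ⟨fun h => hLsymm h, fun h => hLsymm h⟩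
    have key : ∑ m ∈ univ.filter (fun m => L m i), rhat m i d
        - ∑ j ∈ univ.filter (fun j => L i j), rhat i j d
        = ∑ m ∈ univ.filter (fun m => L m i), r m i d
        - ∑ j ∈ univ.filter (fun j => L i j), r i j d := by
      rw [hset, ← Finset.sum_sub_distrib, ← Finset.sum_sub_distrib]
      exact Finset.sum_congr rfl fun m _ => hdiff m i d
    have := hcons i d hd hne
    linarith
end

section
/- Consider the network utility maximization problem of maximizing Σ_{s,d} U_{sd}(x_s^d) over all feasible rate pairs (x, r), where each U_{sd} : ℝ → ℝ is strictly concave and increasing. If (x*, r*) is an optimal solution to this problem, then (x̂*, r̂*), with x̂* = x* and r̂*_{ij}^d = max(r*_{ij}^d − r*_{ji}^d, 0) for all directed links ⟨i,j⟩ and commodities d, is also an optimal solution. -/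
open Finset

/-- Optimality of a rate pair for the network utility maximization problem
`max Σ_{s,d} U s d (x s d)` over feasible rate pairs. -/
def Optimal {N : Type*} [Fintype N] [DecidableEq N]
    (L : N → N → Prop) [DecidableRel L]
    (c : N → N → ℝ) (D : Finset N) (U : N → N → ℝ → ℝ)
    (x : N → N → ℝ) (r : N → N → N → ℝ) : Prop :=
  Feasible L c D x r ∧
  ∀ x' r', Feasible L c D x' r' →
    ∑ s, ∑ d ∈ D, U s d (x' s d) ≤ ∑ s, ∑ d ∈ D, U s d (x s d)

/-- (Proposition 1.)  If `(x*, r*)` is an optimal solution of the network utility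
maximization problem (with strictly concave, increasing utilities), then the delay-aware
mapped pair `(x*, r̂*)` with `r̂*ᵢⱼᵈ = max (r*ᵢⱼᵈ - r*ⱼᵢᵈ) 0` is also optimal. -/
theorem delay_aware_mapping_preserves_optimality
    {N : Type*} [Fintype N] [DecidableEq N]
    (L : N → N → Prop) [DecidableRel L] (hLsymm : Symmetric L)
    (c : N → N → ℝ) (hc : ∀ i j, L i j → 0 < c i j)
    (D : Finset N) (U : N → N → ℝ → ℝ)
    (hUconc : ∀ s d, StrictConcaveOn ℝ Set.univ (U s d))
    (hUmono : ∀ s d, StrictMono (U s d))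
    (xstar : N → N → ℝ) (rstar : N → N → N → ℝ)
    (hopt : Optimal L c D U xstar rstar)
    (rhat : N → N → N → ℝ)
    (hrhat : ∀ i j d, rhat i j d = max (rstar i j d - rstar j i d) 0) :
    Optimal L c D U xstar rhat := by
  obtain ⟨⟨hx, hr, hcap, hflow⟩, hbest⟩ := hopt
  have hset : ∀ i : N, univ.filter (fun m => L m i) = univ.filter (fun j => L i j) := by
    intro i; ext m
    simp only [Finset.mem_filter, Finset.mem_univ, true_and]
    exact ⟨fun h => hLsymm h, fun h => hLsymm h⟩
  refine ⟨⟨hx, ?_, ?_, ?_⟩, hbest⟩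
  · intro i j d _ _; rw [hrhat]; exact le_max_right _ _
  · intro i j h
    refine le_trans (Finset.sum_le_sum fun d hd => ?_) (hcap i j h)
    rw [hrhat, hrhat]
    have h1 := hr i j d h hd
    have h2 := hr j i d (hLsymm h) hd
    rcases le_total (rstar i j d) (rstar j i d) with hle | hle
    · rw [max_eq_right (by linarith), max_eq_left (by linarith)]; linarith
    · rw [max_eq_left (by linarith), max_eq_right (by linarith)]; linarith
  · intro i d hd hne
    have key := hflow i d hd hne
    rw [hset i] at key ⊢
    have heq : ∑ j ∈ univ.filter (fun j => L i j), rhat i j d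
        - ∑ j ∈ univ.filter (fun j => L i j), rhat j i d
        = ∑ j ∈ univ.filter (fun j => L i j), rstar i j d
        - ∑ j ∈ univ.filter (fun j => L i j), rstar j i d := by
      rw [← Finset.sum_sub_distrib, ← Finset.sum_sub_distrib]
      refine Finset.sum_congr rfl fun j _ => ?_
      rw [hrhat, hrhat]
      rcases le_total (rstar i j d) (rstar j i d) with hle | hle
      · rw [max_eq_right (by linarith), max_eq_left (by linarith)]; ring
      · rw [max_eq_left (by linarith), max_eq_right (by linarith)]; ring
    linarith
end

section
/- Let a ∈ (0,1) and b = 1 − a. Let A be the 15×15 real matrix whose nonzero entries are: A[1,1]=b, A[1,2]=a; A[2,3]=b, A[2,4]=a; A[3,9]=b, A[3,10]=a; A[4,9]=b, A[4,10]=a; A[5,9]=b, A[5,10]=a; A[6,10]=b, A[6,11]=a; A[7,12]=b, A[7,13]=a; A[8,14]=b, A[8,15]=a; A[9,5]=b, A[9,6]=a; A[10,6]=b, A[10,7]=a; A[11,7]=b, A[11,8]=a; A[12,6]=b, A[12,7]=a; A[13,7]=b, A[13,8]=a; A[14,12]=b, A[14,13]=a; A[15,14]=b, A[15,15]=a. Let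 π ∈ ℝ^15 be any vector with π_i ≥ 0, Σ_{i=1}^{15} π_i = 1, and Aπ = π. Define P̄_1 = Σ_{i=9}^{15} π_i, P̄_2 = π_3 + π_4 + π_12 + π_13 + 2(π_5 + π_6 + π_7 + π_8 + π_14 + π_15), and P̄_3 = π_2 + π_4 + π_6 + π_9 + 2(π_7 + π_10 + π_12 + π_14) + 3(π_8 + π_11 + π_13 + π_15). Then P̄_3 > P̄_2 > P̄_1 > 0. -/
open Matrix

/-- (Lemma 1, 3-hop case.)  For the 15-state Markov chain of the DTBP policy on a 3-hop
tandem network with Bernoulli(`a`) arrivals, any stationary distribution `π` (with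
`A π = π`) yields stationary mean queue lengths satisfying `P̄₃ > P̄₂ > P̄₁ > 0`.
States (1-based): 1:(0,0,0), 2:(1,0,0), 3:(0,1,0), 4:(1,1,0), 5:(0,2,0), 6:(1,2,0),
7:(2,2,0), 8:(3,2,0), 9:(1,0,1), 10:(2,0,1), 11:(3,0,1), 12:(2,1,1), 13:(3,1,1),
14:(2,2,1), 15:(3,2,1). -/
theorem three_hop_tandem_queue_lengths_strictly_decreasing
    (a b : ℝ) (ha0 : 0 < a) (ha1 : a < 1) (hb : b = 1 - a)
    (A : Matrix (Fin 15) (Fin 15) ℝ)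
    (hA : A = !![b, a, 0, 0, 0, 0, 0, 0, 0, 0, 0, 0, 0, 0, 0;
                 0, 0, b, a, 0, 0, 0, 0, 0, 0, 0, 0, 0, 0, 0;
                 0, 0, 0, 0, 0, 0, 0, 0, b, a, 0, 0, 0, 0, 0;
                 0, 0, 0, 0, 0, 0, 0, 0, b, a, 0, 0, 0, 0, 0;
                 0, 0, 0, 0, 0, 0, 0, 0, b, a, 0, 0, 0, 0, 0;
                 0, 0, 0, 0, 0, 0, 0, 0, 0, b, a, 0, 0, 0, 0;
                 0, 0, 0, 0, 0, 0, 0, 0, 0, 0, 0, b, a, 0, 0;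
                 0, 0, 0, 0, 0, 0, 0, 0, 0, 0, 0, 0, 0, b, a;
                 0, 0, 0, 0, b, a, 0, 0, 0, 0, 0, 0, 0, 0, 0;
                 0, 0, 0, 0, 0, b, a, 0, 0, 0, 0, 0, 0, 0, 0;
                 0, 0, 0, 0, 0, 0, b, a, 0, 0, 0, 0, 0, 0, 0;
                 0, 0, 0, 0, 0, b, a, 0, 0, 0, 0, 0, 0, 0, 0;
                 0, 0, 0, 0, 0, 0, b, a, 0, 0, 0, 0, 0, 0, 0;
                 0, 0, 0, 0, 0, 0, 0, 0, 0, 0, 0, b, a, 0, 0;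
                 0, 0, 0, 0, 0, 0, 0, 0, 0, 0, 0, 0, 0, b, a])
    (π : Fin 15 → ℝ) (hπ0 : ∀ i, 0 ≤ π i) (hπ1 : ∑ i, π i = 1)
    (hstat : A.mulVec π = π)
    (P1 P2 P3 : ℝ)
    (hP1 : P1 = π 8 + π 9 + π 10 + π 11 + π 12 + π 13 + π 14)
    (hP2 : P2 = π 2 + π 3 + π 11 + π 12 + 2 * (π 4 + π 5 + π 6 + π 7 + π 13 + π 14))
    (hP3 : P3 = π 1 + π 3 + π 5 + π 8 + 2 * (π 6 + π 9 + π 11 + π 13)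
                + 3 * (π 7 + π 10 + π 12 + π 14)) :
    P3 > P2 ∧ P2 > P1 ∧ P1 > 0 := by
  subst hb hA hP1 hP2 hP3
  have ha : a ≠ 0 := ne_of_gt ha0
  have hbne : (1:ℝ) - a ≠ 0 := by intro h; linarith
  rw [show π = ![π 0, π 1, π 2, π 3, π 4, π 5, π 6, π 7, π 8, π 9, π 10, π 11, π 12, π 13, π 14]
      from by funext i; fin_cases i <;> rfl] at hstat
  simp only [Matrix.cons_mulVec, Matrix.cons_dotProduct, Matrix.dotProduct_of_isEmpty,
    Matrix.head_cons, Matrix.tail_cons, Matrix.empty_mulVec, zero_mul, add_zero, mul_zero,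
    zero_add, funext_iff, Fin.forall_fin_succ, Matrix.cons_val_zero, Matrix.cons_val_succ,
    IsEmpty.forall_iff, and_true] at hstat
  obtain ⟨h0, h1, h2, h3, h4, h5, h6, h7, h8, h9, h10, h11, h12, h13, h14⟩ := hstat
  clear hπ0
  -- basic equalities
  have e1 : π 1 = π 0 := mul_left_cancel₀ ha (by linarith)
  have e3 : π 3 = π 2 := by linarith
  have e4 : π 4 = π 2 := by linarith
  have e2 : π 2 = π 1 := by
    have : π 1 = (1-a) * π 2 + a * π 3 := by linarith
    rw [e3] at this; linarith
  have e11 : π 11 = π 9 := by linarith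
  have e12 : π 12 = π 10 := by linarith
  have e13 : π 13 = π 6 := by linarith
  have e14 : π 14 = π 13 := mul_left_cancel₀ hbne (by linarith)
  have e7 : π 7 = π 6 := by rw [← e13]; linarith [e14]
  have e5 : π 5 = π 6 := by
    have h5' : (1-a) * π 9 + a * π 10 = π 5 := h5
    have h6' : (1-a) * π 11 + a * π 12 = π 6 := h6
    rw [e11, e12] at h6'; linarith
  have e9 : π 9 = π 5 := by
    have : (1-a) * π 5 + a * π 6 = π 9 := h9
    rw [e5] at this; linarith
  have e10 : π 10 = π 5 := by
    have : (1-a) * π 6 + a * π 7 = π 10 := h10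
    rw [e7] at this; rw [e5]; linarith
  -- remaining: x = π 0, y = π 5, z = π 8
  have hx2 : π 2 = π 0 := by rw [e2, e1]
  have h2' : (1-a) * π 8 + a * π 9 = π 2 := h2
  have h8' : (1-a) * π 4 + a * π 5 = π 8 := h8
  rw [e9] at h2'
  rw [e4, hx2] at h8'
  rw [hx2] at h2'
  have ez : π 8 = π 0 := by
    have key : (2 - a) * (π 8 - π 0) = 0 := by linear_combination h2' - h8'
    have h2a : (2:ℝ) - a ≠ 0 := by intro h; linarith
    have := mul_eq_zero.mp key
    rcases this with h' | h'
    · exact absurd h' h2a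
    · linarith
  have ey : π 5 = π 0 := by
    rw [ez] at h2'
    exact mul_left_cancel₀ ha (by linarith)
  -- all components equal π 0
  rw [show π = ![π 0, π 1, π 2, π 3, π 4, π 5, π 6, π 7, π 8, π 9, π 10, π 11, π 12, π 13, π 14]
      from by funext i; fin_cases i <;> rfl, Fin.sum_univ_succ] at hπ1
  simp only [Fin.sum_univ_succ, Fin.sum_univ_zero, Matrix.cons_val_zero, Matrix.cons_val_succ,
    add_zero] at hπ1
  have v0 : π 0 = 1/15 := by linarith [e1, e2, e3, e4, e5, e7, e9, e10, e11, e12, e13, e14, ez, ey, hx2]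
  have w1 : π 1 = 1/15 := by rw [e1, v0]
  have w2 : π 2 = 1/15 := by rw [hx2, v0]
  have w3 : π 3 = 1/15 := by rw [e3, hx2, v0]
  have w4 : π 4 = 1/15 := by rw [e4, hx2, v0]
  have w5 : π 5 = 1/15 := by rw [ey, v0]
  have w6 : π 6 = 1/15 := by rw [← e5, ey, v0]
  have w7 : π 7 = 1/15 := by rw [e7, ← e5, ey, v0]
  have w8 : π 8 = 1/15 := by rw [ez, v0]
  have w9 : π 9 = 1/15 := by rw [e9, ey, v0]
  have w10 : π 10 = 1/15 := by rw [e10, ey, v0]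
  have w11 : π 11 = 1/15 := by rw [e11, e9, ey, v0]
  have w12 : π 12 = 1/15 := by rw [e12, e10, ey, v0]
  have w13 : π 13 = 1/15 := by rw [e13, ← e5, ey, v0]
  have w14 : π 14 = 1/15 := by rw [e14, e13, ← e5, ey, v0]
  refine ⟨by rw [w1,w3,w4,w5,w6,w7,w8,w9,w10,w11,w12,w13,w14,w2]; norm_num,
          by rw [w2,w3,w4,w5,w6,w7,w8,w9,w10,w11,w12,w13,w14]; norm_num,
          by rw [w8,w9,w10,w11,w12,w13,w14]; norm_num⟩
end

section
/- Let μ be a probability distribution on ℕ × ℕ with finite first moments, where a sample (p, q) represents the queue-length pair (P_i, P_{i−1}). Suppose that μ{ (p,q) : q − p > 3 } = 0 (the downstream queue never exceeds the upstream queue by more than 3), and that μ{ p > q } − μ{ p < q } ≥ 1 − ε for some ε with 0 < ε < 1/2. Then E_μ[p] − E_μ[q] ≥ 1 − 2ε > 0. In particular: E_μ[p] − E_μ[q] ≥ μ{p > q} − 3·μ{p < q}, and μ{p < q} ≤ ε/2. -/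
open MeasureTheory

/-- The core steady-state inequality for consecutive queues in a tandem network under
back-pressure.  `μ` is the stationary distribution of the queue-length pair `(p, q) =
(Pᵢ, Pᵢ₋₁)`: if the downstream queue never exceeds the upstream queue by more than `3`
(μ-a.s.) and `μ{p > q} - μ{p < q} ≥ 1 - ε` with `0 < ε < 1/2`, then the mean queue
lengths satisfy `E[p] - E[q] ≥ 1 - 2ε > 0`; in particular
`E[p] - E[q] ≥ μ{p > q} - 3 μ{p < q}` and `μ{p < q} ≤ ε/2`. -/
theorem tandem_mean_queue_difference
    (μ : Measure (ℕ × ℕ)) [IsProbabilityMeasure μ]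
    (hInt1 : Integrable (fun p : ℕ × ℕ => (p.1 : ℝ)) μ)
    (hInt2 : Integrable (fun p : ℕ × ℕ => (p.2 : ℝ)) μ)
    (ε : ℝ) (hε0 : 0 < ε) (hε : ε < 1 / 2)
    (hsupp : μ {p : ℕ × ℕ | p.1 + 3 < p.2} = 0)
    (hrate : (μ {p : ℕ × ℕ | p.2 < p.1}).toReal - (μ {p : ℕ × ℕ | p.1 < p.2}).toReal
              ≥ 1 - ε) :
    ((∫ p, (p.1 : ℝ) ∂μ) - (∫ p, (p.2 : ℝ) ∂μ) ≥ 1 - 2 * ε ∧ (0 : ℝ) < 1 - 2 * ε) ∧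
    (∫ p, (p.1 : ℝ) ∂μ) - (∫ p, (p.2 : ℝ) ∂μ)
        ≥ (μ {p : ℕ × ℕ | p.2 < p.1}).toReal - 3 * (μ {p : ℕ × ℕ | p.1 < p.2}).toReal ∧
    (μ {p : ℕ × ℕ | p.1 < p.2}).toReal ≤ ε / 2 := by
  set A : Set (ℕ × ℕ) := {p : ℕ × ℕ | p.2 < p.1} with hAdef
  set B : Set (ℕ × ℕ) := {p : ℕ × ℕ | p.1 < p.2} with hBdef
  have hA : MeasurableSet A := measurableSet_lt measurable_snd measurable_fst
  have hB : MeasurableSet B := measurableSet_lt measurable_fst measurable_snd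
  set g : ℕ × ℕ → ℝ := fun p =>
    A.indicator (fun _ => (1:ℝ)) p + B.indicator (fun _ => (-3:ℝ)) p with hgdef
  have hgA : Integrable (A.indicator (fun _ => (1:ℝ))) μ :=
    (integrable_const (1:ℝ)).indicator hA
  have hgB : Integrable (B.indicator (fun _ => (-3:ℝ))) μ :=
    (integrable_const (-3:ℝ)).indicator hB
  have hgint : Integrable g μ := hgA.add hgB
  have hginteg : ∫ p, g p ∂μ = (μ A).toReal - 3 * (μ B).toReal := by
    rw [hgdef]
    rw [integral_add hgA hgB, integral_indicator_const _ hA, integral_indicator_const _ hB]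
    simp
    simp only [Measure.real]
    ring
  have hae : ∀ᵐ p ∂μ, g p ≤ (p.1 : ℝ) - (p.2 : ℝ) := by
    have hsupp' : ∀ᵐ p ∂μ, ¬ (p.1 + 3 < p.2) := by
      rw [ae_iff]
      simpa using hsupp
    filter_upwards [hsupp'] with p hp
    rcases lt_trichotomy p.1 p.2 with h | h | h
    · have hAp : p ∉ A := by simp [hAdef]; omega
      have hBp : p ∈ B := h
      have : (p.2 : ℝ) ≤ (p.1 : ℝ) + 3 := by
        have : p.2 ≤ p.1 + 3 := by omega
        exact_mod_cast this
      simp [hgdef, Set.indicator_of_notMem hAp, Set.indicator_of_mem hBp]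
      linarith
    · have hAp : p ∉ A := by simp [hAdef, h]
      have hBp : p ∉ B := by simp [hBdef, h]
      simp [hgdef, Set.indicator_of_notMem hAp, Set.indicator_of_notMem hBp, h]
    · have hAp : p ∈ A := h
      have hBp : p ∉ B := by simp [hBdef]; omega
      have : (p.2 : ℝ) + 1 ≤ (p.1 : ℝ) := by
        have : p.2 + 1 ≤ p.1 := h
        exact_mod_cast this
      simp [hgdef, Set.indicator_of_mem hAp, Set.indicator_of_notMem hBp]
      linarith
  have hkey : (μ A).toReal - 3 * (μ B).toReal
      ≤ (∫ p, (p.1 : ℝ) ∂μ) - (∫ p, (p.2 : ℝ) ∂μ) := by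
    have := integral_mono_ae hgint (hInt1.sub hInt2) hae
    rw [hginteg] at this
    simp only [Pi.sub_apply] at this
    rwa [integral_sub hInt1 hInt2] at this
  have hdisj : Disjoint A B := by
    rw [Set.disjoint_left]
    intro p hpA hpB
    have h1 : p.2 < p.1 := hpA
    have h2 : p.1 < p.2 := hpB
    omega
  have hsum : (μ A).toReal + (μ B).toReal ≤ 1 := by
    have h1 : μ A + μ B = μ (A ∪ B) := (measure_union hdisj hB).symm
    have h2 : μ (A ∪ B) ≤ 1 := prob_le_one
    have hAne : μ A ≠ ⊤ := measure_ne_top μ A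
    have hBne : μ B ≠ ⊤ := measure_ne_top μ B
    have h3 : (μ A + μ B).toReal ≤ ENNReal.toReal 1 :=
      ENNReal.toReal_mono ENNReal.one_ne_top (h1 ▸ h2)
    rwa [ENNReal.toReal_add hAne hBne, ENNReal.toReal_one] at h3
  have hBle : (μ B).toReal ≤ ε / 2 := by linarith
  refine ⟨⟨by linarith, by linarith⟩, hkey, hBle⟩
end

section
/- Fix n ≥ 1 and an arbitrary arrival sequence X : ℕ → {0,1}. Define queue lengths P_i[t] ∈ ℕ for 0 ≤ i ≤ n and t ∈ ℕ by: P_0[t] = 0 for all t; P_i[0] = 0 for all i; for 1 ≤ i ≤ n−1, P_i[t+1] = P_i[t] − 𝟙{P_i[t] > P_{i−1}[t]} + 𝟙{P_{i+1}[t] > P_i[t]}; and P_n[t+1] = P_n[t] − 𝟙{P_n[t] > P_{n−1}[t]} + X[t]. Then for every t ∈ ℕ and every i with 1 ≤ i ≤ n, |P_i[t] − P_{i−1}[t]| ≤ 3. -/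
/-- Under the DTBP dynamics on an `n`-hop tandem network with unit link capacities,
a single flow destined to node `0`, and arbitrary `{0,1}`-valued arrivals `X` at the
source node `n`, neighboring queue lengths never differ by more than `3`:
`|Pᵢ[t] - Pᵢ₋₁[t]| ≤ 3` for all `t` and all `1 ≤ i ≤ n`. -/
theorem dtbp_tandem_neighbor_queue_difference_bounded
    (n : ℕ) (hn : 1 ≤ n)
    (X : ℕ → ℕ) (hX : ∀ t, X t ≤ 1)
    (P : ℕ → ℕ → ℕ)
    (hdest : ∀ t, P t 0 = 0)
    (hinit : ∀ i, i ≤ n → P 0 i = 0)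
    (hmid : ∀ t i, 1 ≤ i → i < n →
      P (t + 1) i = P t i - (if P t (i - 1) < P t i then 1 else 0)
                    + (if P t i < P t (i + 1) then 1 else 0))
    (hsrc : ∀ t,
      P (t + 1) n = P t n - (if P t (n - 1) < P t n then 1 else 0) + X t) :
    ∀ t i, 1 ≤ i → i ≤ n → |(P t i : ℤ) - (P t (i - 1) : ℤ)| ≤ 3 := by
  have key : ∀ t i, 1 ≤ i → i ≤ n →
      (P t (i - 1) : ℤ) - 1 ≤ (P t i : ℤ) ∧ (P t i : ℤ) ≤ (P t (i - 1) : ℤ) + 2 := by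
    intro t
    induction t with
    | zero =>
      intro i h1 h2
      rw [hinit i h2, hinit (i - 1) (by omega)]
      norm_num
    | succ t ih =>
      intro i h1 h2
      obtain ⟨l, u⟩ := ih i h1 h2
      have hXt := hX t
      have hi : P (t + 1) i = P t i - (if P t (i - 1) < P t i then 1 else 0)
          + (if i = n then X t else if P t i < P t (i + 1) then 1 else 0) := by
        by_cases h : i = n
        · subst h; simpa using hsrc t
        · rw [hmid t i h1 (by omega)]; simp [h]
      by_cases h2' : i = 1
      · subst h2'
        simp only [show (1 : ℕ) - 1 = 0 from rfl] at *
        rw [hdest (t + 1)]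
        rw [hdest t] at l u hi
        split_ifs at hi <;> omega
      · have h3 : 1 ≤ i - 1 := by omega
        have h5 : i - 1 + 1 = i := by omega
        have hprev := hmid t (i - 1) h3 (by omega)
        rw [h5] at hprev
        split_ifs at hi hprev <;> omega
  intro t i h1 h2
  obtain ⟨l, u⟩ := key t i h1 h2
  rw [abs_le]
  omega
end

section
/- Let n ≥ 1, let c > 0 be the decision threshold, and let ν ∈ ℝ^n with ν_i > 0 for all i and Σ_{i=1}^n ν_i < c. Let M : ℕ → ℝ^n and D : ℕ → ℝ^n satisfy, for every t: either max_i M_i[t] ≤ c and D[t] = 0, or there exists i* with M_{i*}[t] = max_i M_i[t] > c, D_{i*}[t] = c, and D_j[t] = 0 for j ≠ i*; and M[t+1] = M[t] + ν − D[t]. Let 𝓜 = { m ∈ ℝ^n : Σ_{i=1}^n m_i < (n+1)c }. Then for every t_0 ≥ 0 and every initial M[t_0] ∈ ℝ^n there exists a finite T such that M[t_0 + T] ∈ 𝓜, and moreover M[t] ∈ 𝓜 for all t ≥ t_0 + T. -/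
open Finset

/-- The token-count dynamics of the delay-aware scheduler: `M t i` is the token count
of counter `i` at slot `t`, tokens arrive at rate `ν i` per slot, and in each slot the
server removes `c` tokens from a counter whose count maximally exceeds the threshold `c`,
if any such counter exists; `D t` are the resulting departures. -/
def TokenDynamics (n : ℕ) (c : ℝ) (ν : Fin n → ℝ) (M D : ℕ → Fin n → ℝ) : Prop :=
  (∀ t, ((∀ i, M t i ≤ c) ∧ D t = 0) ∨
      (∃ iStar, c < M t iStar ∧ (∀ i, M t i ≤ M t iStar) ∧ D t iStar = c ∧
        ∀ j, j ≠ iStar → D t j = 0)) ∧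
  (∀ t i, M (t + 1) i = M t i + ν i - D t i)

/-- (Lemma 3.)  For the token-count dynamics with `Σᵢ νᵢ < c`, the set
`𝓜 = {m : Σᵢ mᵢ < (n+1)c}` is attractive and invariant: from any time `t₀` and any
initial token counts, there is a finite `T` with `M[t₀+T] ∈ 𝓜`, and `M[t] ∈ 𝓜` for all
`t ≥ t₀ + T`. -/
theorem token_count_attractive_invariant
    (n : ℕ) (hn : 1 ≤ n) (c : ℝ) (hc : 0 < c)
    (ν : Fin n → ℝ) (hν : ∀ i, 0 < ν i) (hνsum : ∑ i, ν i < c)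
    (M D : ℕ → Fin n → ℝ)
    (hdyn : TokenDynamics n c ν M D) :
    ∀ t₀ : ℕ, ∃ T : ℕ,
      (∑ i, M (t₀ + T) i < ((n : ℝ) + 1) * c) ∧
      ∀ t, t₀ + T ≤ t → ∑ i, M t i < ((n : ℝ) + 1) * c := by
  obtain ⟨hserve, hstep⟩ := hdyn
  intro t₀
  set B : ℝ := ((n : ℝ) + 1) * c with hB
  set δ : ℝ := c - ∑ i, ν i with hδ
  have hδpos : 0 < δ := sub_pos.mpr hνsum
  set S : ℕ → ℝ := fun t => ∑ i, M t i with hS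
  have hSstep : ∀ t, S (t + 1) = S t + (∑ i, ν i) - ∑ i, D t i := by
    intro t
    simp only [hS]
    simp only [hstep]
    rw [Finset.sum_sub_distrib, Finset.sum_add_distrib]
  have hKey : ∀ t, S (t + 1) < B ∨ S (t + 1) = S t - δ := by
    intro t
    rcases hserve t with ⟨hle, hD0⟩ | ⟨iStar, hgt, hmax, hDc, hD0⟩
    · left
      have hDsum : ∑ i, D t i = 0 := by simp [hD0]
      have hSle : S t ≤ (n : ℝ) * c := by
        calc S t ≤ ∑ _i : Fin n, c := Finset.sum_le_sum (fun i _ => hle i)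
        _ = (n : ℝ) * c := by simp [mul_comm]
      have := hSstep t
      rw [hDsum] at this
      rw [this, hB]
      linarith
    · right
      have hDsum : ∑ i, D t i = c := by
        rw [Finset.sum_eq_single iStar (fun j _ hj => hD0 j hj) (by simp)]
        exact hDc
      rw [hSstep t, hDsum, hδ]
      ring
  have hInv : ∀ t, S t < B → S (t + 1) < B := by
    intro t h
    rcases hKey t with h' | h'
    · exact h'
    · rw [h']; linarith
  have hIter : ∀ k : ℕ, S (t₀ + k) < B ∨ S (t₀ + k) ≤ S t₀ - k * δ := by
    intro k
    induction k with
    | zero => right; simp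
    | succ k ih =>
      rcases ih with h | h
      · left
        rw [← Nat.add_assoc]
        exact hInv (t₀ + k) h
      · by_cases hlt : S (t₀ + k) < B
        · left
          rw [← Nat.add_assoc]
          exact hInv (t₀ + k) hlt
        · rcases hKey (t₀ + k) with h' | h'
          · left; rw [← Nat.add_assoc]; exact h'
          · right
            rw [← Nat.add_assoc, h']
            push_cast
            linarith
  obtain ⟨k, hk⟩ := exists_nat_gt ((S t₀ - B) / δ)
  have hkδ : S t₀ - (k : ℝ) * δ < B := by
    rw [div_lt_iff₀ hδpos] at hk
    linarith
  have hT : S (t₀ + k) < B := by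
    rcases hIter k with h | h
    · exact h
    · linarith
  refine ⟨k, hT, ?_⟩
  intro t ht
  induction t with
  | zero => simpa [Nat.le_zero.mp ht] using hT
  | succ t ih =>
    rcases Nat.lt_or_ge (t₀ + k) (t + 1) with h | h
    · exact hInv t (ih (Nat.lt_succ_iff.mp h))
    · have : t₀ + k = t + 1 := le_antisymm ht h
      rw [← this]; exact hT
end

section
/- Let n ≥ 1, c > 0, and ν ∈ ℝ^n with ν_i > 0 for all i and Σ_{i=1}^n ν_i < c. Let M : ℕ → ℝ^n and D : ℕ → ℝ^n satisfy the token-count dynamics: for every t, either max_i M_i[t] ≤ c and D[t] = 0, or there exists i* with M_{i*}[t] = max_i M_i[t] > c, D_{i*}[t] = c, and D_j[t] = 0 for j ≠ i*; and M[t+1] = M[t] + ν − D[t]. Then the set 𝓜 = { m ∈ ℝ^n : Σ_{i=1}^n m_i < (n+1)c } is invariant: if Σ_{i=1}^n M_i[t] < (n+1)c, then Σ_{i=1}^n M_i[t+1] < (n+1)c. -/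
open Finset

/-- (Invariance step of Lemma 3.)  The set `𝓜 = {m : Σᵢ mᵢ < (n+1)c}` is invariant
under the token-count dynamics: if `Σᵢ Mᵢ[t] < (n+1)c`, then `Σᵢ Mᵢ[t+1] < (n+1)c`. -/
theorem token_count_invariance_step
    (n : ℕ) (hn : 1 ≤ n) (c : ℝ) (hc : 0 < c)
    (ν : Fin n → ℝ) (hν : ∀ i, 0 < ν i) (hνsum : ∑ i, ν i < c)
    (M D : ℕ → Fin n → ℝ)
    (hdyn : TokenDynamics n c ν M D)
    (t : ℕ) (ht : ∑ i, M t i < ((n : ℝ) + 1) * c) :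
    ∑ i, M (t + 1) i < ((n : ℝ) + 1) * c := by
  obtain ⟨hcase, hstep⟩ := hdyn
  have hsum : ∑ i, M (t + 1) i = ∑ i, M t i + ∑ i, ν i - ∑ i, D t i := by
    simp only [hstep]
    rw [Finset.sum_sub_distrib, Finset.sum_add_distrib]
  rcases hcase t with ⟨hle, hD0⟩ | ⟨iStar, hgt, hmax, hDi, hDj⟩
  · have hMle : ∑ i, M t i ≤ (n : ℝ) * c := by
      calc ∑ i, M t i ≤ ∑ _i : Fin n, c := Finset.sum_le_sum fun i _ => hle i
        _ = (n : ℝ) * c := by simp [mul_comm]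
    rw [hsum, hD0]
    simp only [Pi.zero_apply, Finset.sum_const_zero, sub_zero]
    nlinarith
  · have hDsum : ∑ i, D t i = c := by
      rw [Finset.sum_eq_single iStar]
      · exact hDi
      · intro j _ hj; exact hDj j hj
      · intro h; exact absurd (Finset.mem_univ iStar) h
    rw [hsum, hDsum]
    linarith
end

section
/- Let n ≥ 1, c > 0, and ν ∈ ℝ^n with ν_i > 0 for all i and Σ_{i=1}^n ν_i < c. Let M : ℕ → ℝ^n and D : ℕ → ℝ^n satisfy the token-count dynamics: for every t, either max_i M_i[t] ≤ c and D[t] = 0, or there exists i* with M_{i*}[t] = max_i M_i[t] > c, D_{i*}[t] = c, and D_j[t] = 0 for j ≠ i*; and M[t+1] = M[t] + ν − D[t]. Suppose Σ_{i=1}^n M_i[t_0] ≥ (n+1)c at some time t_0, and let T = ⌈(Σ_{i=1}^n M_i[t_0] − (n+1)c)/(c − Σ_{i=1}^n ν_i)⌉ + 1. Then Σ_{i=1}^n M_i[t_0 + T] < (n+1)c. -/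
open Finset

/-- (Attraction-time bound of Lemma 3.)  If the total token count at time `t₀` is at
least `(n+1)c`, then after `T = ⌈(Σᵢ Mᵢ[t₀] - (n+1)c)/(c - Σᵢ νᵢ)⌉ + 1` slots the total
token count is below `(n+1)c`. -/
theorem token_count_attraction_time
    (n : ℕ) (hn : 1 ≤ n) (c : ℝ) (hc : 0 < c)
    (ν : Fin n → ℝ) (hν : ∀ i, 0 < ν i) (hνsum : ∑ i, ν i < c)
    (M D : ℕ → Fin n → ℝ)
    (hdyn : TokenDynamics n c ν M D)
    (t₀ : ℕ) (ht₀ : ((n : ℝ) + 1) * c ≤ ∑ i, M t₀ i)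
    (T : ℕ)
    (hT : T = ⌈(∑ i, M t₀ i - ((n : ℝ) + 1) * c) / (c - ∑ i, ν i)⌉₊ + 1) :
    ∑ i, M (t₀ + T) i < ((n : ℝ) + 1) * c := by
  obtain ⟨hstep, hrec⟩ := hdyn
  have hδ : (0:ℝ) < c - ∑ i, ν i := by linarith
  have hsum : ∀ t, ∑ i, M (t+1) i = ∑ i, M t i + ∑ i, ν i - ∑ i, D t i := by
    intro t
    simp only [hrec t]
    rw [Finset.sum_sub_distrib, Finset.sum_add_distrib]
  have hDsum : ∀ t, (∑ i, D t i = 0 ∧ ∀ i, M t i ≤ c) ∨ ∑ i, D t i = c := by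
    intro t
    rcases hstep t with ⟨h1, h2⟩ | ⟨i, hi, hmax, hDi, hD0⟩
    · left; exact ⟨by simp [h2], h1⟩
    · right
      rw [Finset.sum_eq_single i (fun j _ hj => hD0 j hj) (by simp)]
      exact hDi
  have hnc : ∀ t, (∀ i, M t i ≤ c) → ∑ i, M t i ≤ (n:ℝ) * c := by
    intro t hle
    calc ∑ i, M t i ≤ ∑ _i : Fin n, c := Finset.sum_le_sum (fun i _ => hle i)
    _ = (n:ℝ) * c := by simp [mul_comm]
  have hinv : ∀ t, ∑ i, M t i < ((n:ℝ)+1)*c → ∑ i, M (t+1) i < ((n:ℝ)+1)*c := by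
    intro t h
    rcases hDsum t with ⟨hz, hle⟩ | heq
    · have := hnc t hle
      rw [hsum t, hz]
      nlinarith
    · rw [hsum t, heq]; linarith
  have hdec : ∀ t, ((n:ℝ)+1)*c ≤ ∑ i, M t i →
      ∑ i, M (t+1) i = ∑ i, M t i + ∑ i, ν i - c := by
    intro t h
    rcases hDsum t with ⟨hz, hle⟩ | heq
    · exfalso
      have := hnc t hle
      nlinarith
    · rw [hsum t, heq]
  have key : ∀ k, ∑ i, M (t₀+k) i < ((n:ℝ)+1)*c ∨
      ∑ i, M (t₀+k) i ≤ ∑ i, M t₀ i - k * (c - ∑ i, ν i) := by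
    intro k
    induction k with
    | zero => right; simp
    | succ k ih =>
      have heq : t₀ + (k+1) = (t₀+k) + 1 := rfl
      rcases ih with h | h
      · left; rw [heq]; exact hinv (t₀+k) h
      · by_cases hlt : ∑ i, M (t₀+k) i < ((n:ℝ)+1)*c
        · left; rw [heq]; exact hinv (t₀+k) hlt
        · right
          push_neg at hlt
          rw [heq, hdec (t₀+k) hlt]
          push_cast
          linarith
  rcases key T with h | h
  · exact h
  · have hx : (∑ i, M t₀ i - ((n:ℝ)+1)*c) / (c - ∑ i, ν i) ≤ (T:ℝ) - 1 := by
      rw [hT]; push_cast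
      have := Nat.le_ceil ((∑ i, M t₀ i - ((n:ℝ)+1)*c) / (c - ∑ i, ν i))
      linarith
    rw [div_le_iff₀ hδ] at hx
    nlinarith
end
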